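/- Let F be the free group on two generators, p a prime, n ≥ 3, and G = F/λ_n(F). Then G has exactly p+1 maximal subgroups, and the power subgroups M^(p^(n-2)), as M ranges over the maximal subgroups of G, are pairwise distinct subgroups of order p contained in λ_{n-1}(F)/λ_n(F). Moreover every element of M outside the Frattini subgroup Φ(G) has order p^(n-1). -/

import Mathlib

/-- The subgroup generated by `m`-th powers of elements of `H`. -/
def pPow {G : Type*} [Group G] (H : Subgroup G) (m : ℕ) : Subgroup G :=
  Subgroup.closure {x : G | ∃ h ∈ H, x = h ^ m}

/-- The `p`-central series: `lam p 1 = ⊤` and `lam p (n+1) = [lam p n, G] ⊔ (lam p n)^p`.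
    (We also set `lam p 0 = ⊤`.) -/
def lam {G : Type*} [Group G] (p : ℕ) : ℕ → Subgroup G
  | 0 => ⊤
  | 1 => ⊤
  | (n+2) => ⁅(lam p (n+1) : Subgroup G), (⊤ : Subgroup G)⁆ ⊔ pPow (lam p (n+1)) p

theorem pPow_normal {G : Type*} [Group G] (H : Subgroup G) [hH : H.Normal] (m : ℕ) :
    (pPow H m).Normal := by
  have key : ∀ x ∈ pPow H m, ∀ g : G, g * x * g⁻¹ ∈ pPow H m := by
    intro x hx
    induction hx using Subgroup.closure_induction with
    | mem y hy =>
        intro g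
        obtain ⟨h, hh, rfl⟩ := hy
        refine Subgroup.subset_closure ⟨g * h * g⁻¹, hH.conj_mem h hh g, ?_⟩
        exact conj_pow.symm
    | one => intro g; simpa using (pPow H m).one_mem
    | mul x y hx hy ihx ihy =>
        intro g
        have h2 := mul_mem (ihx g) (ihy g)
        have : g * x * g⁻¹ * (g * y * g⁻¹) = g * (x * y) * g⁻¹ := by group
        rwa [this] at h2
    | inv x hx ihx =>
        intro g
        have h2 := inv_mem (ihx g)
        have : (g * x * g⁻¹)⁻¹ = g * x⁻¹ * g⁻¹ := by group
        rwa [this] at h2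
  exact ⟨fun x hx g => key x hx g⟩

theorem lam_normal' {G : Type*} [Group G] (p : ℕ) : ∀ n, (lam (G := G) p n).Normal
  | 0 => inferInstanceAs (⊤ : Subgroup G).Normal
  | 1 => inferInstanceAs (⊤ : Subgroup G).Normal
  | (n+2) => by
      haveI := lam_normal' (G := G) p (n+1)
      haveI := pPow_normal (lam (G := G) p (n+1)) p
      show (⁅(lam p (n+1) : Subgroup G), (⊤ : Subgroup G)⁆ ⊔ pPow (lam p (n+1)) p).Normal
      infer_instance

instance lam_normal {G : Type*} [Group G] (p n : ℕ) : (lam (G := G) p n).Normal :=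
  lam_normal' p n

/-- The union of all conjugates of the cyclic subgroup generated by `x`. -/
def conjClosure {G : Type*} [Group G] (x : G) : Set G :=
  ⋃ g : G, (fun h => g⁻¹ * h * g) '' (Subgroup.zpowers x : Set G)

/-- `Σ(x,y)`: the union of all conjugates of `⟨x⟩`, `⟨y⟩` and `⟨xy⟩`. -/
def SigmaSet {G : Type*} [Group G] (x y : G) : Set G :=
  conjClosure x ∪ conjClosure y ∪ conjClosure (x * y)

/-- `{x₁,y₁}` and `{x₂,y₂}` form a Beauville structure for `G`. -/
def IsBeauvilleStructure {G : Type*} [Group G] (x₁ y₁ x₂ y₂ : G) : Prop :=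
  Subgroup.closure {x₁, y₁} = ⊤ ∧ Subgroup.closure {x₂, y₂} = ⊤ ∧
    SigmaSet x₁ y₁ ∩ SigmaSet x₂ y₂ = {1}

/-- A Beauville group: a finite nontrivial (2-generated) group admitting a Beauville
structure. -/
def IsBeauvilleGroup (G : Type*) [Group G] : Prop :=
  Finite G ∧ Nontrivial G ∧ ∃ x₁ y₁ x₂ y₂ : G, IsBeauvilleStructure x₁ y₁ x₂ y₂

/-!
`G = F/λ_n(F)` is nilpotent of exponent `p^(n-1)`, so its maximal subgroups are normal of index
`p` and contain `λ_2(G)`. The map `G → (ℤ/p)²` sending the generators to the standard basis has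
kernel exactly `λ_2(G)`, so the maximal subgroups of `G` correspond to the `p + 1` lines of
`(ℤ/p)²`, and `λ_2(G) ≤ Φ(G)`. A maximal subgroup is `M = ⟨x⟩ λ_2(G)` for any `x ∈ M` outside
`λ_2(G)`, and `(x u)^(p^(n-2)) = x^(p^(n-2))` for `u ∈ λ_2(G)`, so `M^(p^(n-2)) = ⟨x^(p^(n-2))⟩`.
Lifting further to `G → (ℤ/p^(n-1))²` shows that `x^(p^(n-2)) ≠ 1`, while `x^(p^(n-1)) = 1`;
the same lift recovers the line of `M` from `x^(p^(n-2))`, so the power subgroups are distinct.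
-/

open Subgroup
open scoped commutatorElement

section PCentralSeries

variable {G H : Type*} [Group G] [Group H] (p : ℕ)

theorem pPow_le_self (K : Subgroup G) (m : ℕ) : pPow K m ≤ K :=
  (closure_le K).2 fun _ ⟨_, hh, hx⟩ => hx ▸ pow_mem hh m

theorem pow_mem_pPow {K : Subgroup G} {g : G} (hg : g ∈ K) (m : ℕ) : g ^ m ∈ pPow K m :=
  subset_closure ⟨g, hg, rfl⟩

theorem pPow_mono {K L : Subgroup G} (h : K ≤ L) (m : ℕ) : pPow K m ≤ pPow L m :=
  closure_mono fun _ ⟨g, hg, hx⟩ => ⟨g, h hg, hx⟩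

theorem map_pPow (f : G →* H) (K : Subgroup G) (m : ℕ) :
    (pPow K m).map f = pPow (K.map f) m := by
  rw [pPow, MonoidHom.map_closure]
  congr 1
  ext x
  simp only [Set.mem_image, Set.mem_ofPred_eq, mem_map]
  constructor
  · rintro ⟨_, ⟨g, hg, rfl⟩, rfl⟩
    exact ⟨f g, ⟨g, hg, rfl⟩, map_pow f g m⟩
  · rintro ⟨_, ⟨g, hg, rfl⟩, rfl⟩
    exact ⟨g ^ m, ⟨g, hg, rfl⟩, map_pow f g m⟩

theorem lam_succ_succ (k : ℕ) :
    lam p (k + 2) = ⁅(lam p (k + 1) : Subgroup G), ⊤⁆ ⊔ pPow (lam p (k + 1) : Subgroup G) p :=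
  rfl

theorem commutator_lam_le : ∀ k, ⁅lam (G := G) p k, (⊤ : Subgroup G)⁆ ≤ lam p (k + 1)
  | 0 => le_top
  | _ + 1 => le_sup_left

theorem pPow_lam_le : ∀ k, pPow (lam (G := G) p k) p ≤ lam p (k + 1)
  | 0 => le_top
  | _ + 1 => le_sup_right

theorem lam_succ_le : ∀ k, lam (G := G) p (k + 1) ≤ lam p k
  | 0 => le_top
  | _ + 1 => sup_le (commutator_le_left _ _) (pPow_le_self _ _)

theorem lam_antitone : Antitone (lam (G := G) p) :=
  antitone_nat_of_succ_le (lam_succ_le p)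

theorem map_lam_le (f : G →* H) : ∀ k, (lam p k).map f ≤ lam p k
  | 0 | 1 => le_top
  | k + 2 => by
    rw [lam_succ_succ, Subgroup.map_sup, map_commutator, map_pPow]
    exact sup_le_sup (commutator_mono (map_lam_le f (k + 1)) le_top)
      (pPow_mono (map_lam_le f (k + 1)) p)

theorem map_lam_of_surjective {f : G →* H} (hf : Function.Surjective f) :
    ∀ k, (lam p k).map f = lam p k
  | 0 | 1 => map_top_of_surjective f hf
  | k + 2 => by
    rw [lam_succ_succ, lam_succ_succ, Subgroup.map_sup, map_commutator, map_pPow,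
      map_lam_of_surjective hf (k + 1), map_top_of_surjective f hf]

theorem lam_quotient_lam_eq_bot (k : ℕ) : lam p k = (⊥ : Subgroup (G ⧸ lam (G := G) p k)) := by
  rw [← map_lam_of_surjective p (QuotientGroup.mk'_surjective _), QuotientGroup.map_mk'_self]

/-- Modulo `λ_{m+1}`, an element `v ∈ λ_m` is central of order dividing `p`. -/
theorem exists_mul_pow_prime_eq {m : ℕ} {v : G} (hv : v ∈ lam p m) (g : G) :
    ∃ w ∈ lam p (m + 1), (g * v) ^ p = g ^ p * w := by
  have hcomm : Commute (g : G ⧸ lam p (m + 1)) v := by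
    rw [Commute, SemiconjBy, ← QuotientGroup.mk_mul, ← QuotientGroup.mk_mul, QuotientGroup.eq]
    have : (g * v)⁻¹ * (v * g) = ⁅v⁻¹, g⁻¹⁆ := by group
    exact this ▸ commutator_lam_le p m (commutator_mem_commutator (inv_mem hv) (mem_top _))
  have hvp : (v : G ⧸ lam p (m + 1)) ^ p = 1 := by
    rw [← QuotientGroup.mk_pow, QuotientGroup.eq_one_iff]
    exact pPow_lam_le p m (pow_mem_pPow hv p)
  refine ⟨(g ^ p)⁻¹ * (g * v) ^ p, QuotientGroup.eq.mp ?_, by group⟩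
  rw [QuotientGroup.mk_pow, QuotientGroup.mk_pow, QuotientGroup.mk_mul, hcomm.mul_pow, hvp,
    mul_one]

theorem exists_mul_pow_prime_pow_eq {m : ℕ} {v : G} (hv : v ∈ lam p m) (g : G) (k : ℕ) :
    ∃ w ∈ lam p (m + k), (g * v) ^ p ^ k = g ^ p ^ k * w := by
  induction k with
  | zero => exact ⟨v, hv, by simp⟩
  | succ k ih =>
    obtain ⟨w, hw, hgw⟩ := ih
    obtain ⟨w', hw', hgw'⟩ := exists_mul_pow_prime_eq p hw (g ^ p ^ k)
    exact ⟨w', hw', by rw [pow_succ, pow_mul, hgw, hgw', ← pow_mul, ← pow_succ]⟩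

theorem pow_prime_pow_mem_lam (g : G) (k : ℕ) : g ^ p ^ k ∈ lam p (k + 1) := by
  obtain ⟨w, hw, h⟩ := exists_mul_pow_prime_pow_eq p (m := 1) (mem_top g) (1 : G) k
  rw [one_mul, one_pow, one_mul] at h
  exact h ▸ (add_comm 1 k ▸ hw)

theorem pPow_prime_pow_le_lam (K : Subgroup G) (k : ℕ) : pPow K (p ^ k) ≤ lam p (k + 1) :=
  (closure_le _).2 fun _ ⟨g, _, hx⟩ => hx ▸ pow_prime_pow_mem_lam p g k

theorem pow_prime_pow_eq_one_of_lam_eq_bot {k : ℕ} (h : lam (G := G) p (k + 1) = ⊥) (g : G) :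
    g ^ p ^ k = 1 :=
  mem_bot.mp (h ▸ pow_prime_pow_mem_lam p g k)

theorem mul_pow_prime_pow_eq_of_lam_eq_bot {j k : ℕ} (h : lam (G := G) p (j + k) = ⊥) {v : G}
    (hv : v ∈ lam p j) (g : G) : (g * v) ^ p ^ k = g ^ p ^ k := by
  obtain ⟨w, hw, hgw⟩ := exists_mul_pow_prime_pow_eq p hv g k
  rw [h, mem_bot] at hw
  rw [hgw, hw, mul_one]

theorem pPow_zpowers_sup_lam_two {k : ℕ} (hlam : lam (G := G) p (k + 2) = ⊥) (x : G) :
    pPow (zpowers x ⊔ lam p 2) (p ^ k) = zpowers (x ^ p ^ k) := by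
  refine le_antisymm ((closure_le _).2 ?_)
    (zpowers_le.mpr (pow_mem_pPow (mem_sup_left (mem_zpowers x)) _))
  rintro _ ⟨_, hm, rfl⟩
  obtain ⟨_, ⟨j, rfl⟩, u, hu, rfl⟩ := mem_sup_of_normal_right.mp hm
  rw [mul_pow_prime_pow_eq_of_lam_eq_bot p (add_comm 2 k ▸ hlam) hu, ← zpow_natCast,
    ← zpow_natCast, ← zpow_mul, mul_comm, zpow_mul]
  exact zpow_mem (mem_zpowers _) j

theorem lowerCentralSeries_le_lam : ∀ k, (⊤ : Subgroup G).lowerCentralSeries k ≤ lam p (k + 1)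
  | 0 => le_top
  | k + 1 => by
    rw [Subgroup.lowerCentralSeries_succ]
    exact (commutator_mono (lowerCentralSeries_le_lam k) le_rfl).trans
      (commutator_lam_le p (k + 1))

theorem isNilpotent_of_lam_eq_bot {k : ℕ} (h : lam (G := G) p (k + 1) = ⊥) :
    Group.IsNilpotent G :=
  Subgroup.nilpotent_iff_lowerCentralSeries.mpr
    ⟨k, le_bot_iff.mp (h ▸ lowerCentralSeries_le_lam p k)⟩

theorem lam_succ_le_range_pow {A : Type*} [CommGroup A] :
    ∀ k, lam (G := A) p (k + 1) ≤ (powMonoidHom (p ^ k) : A →* A).range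
  | 0 => fun x _ => ⟨x, pow_one x⟩
  | k + 1 => by
    rw [lam_succ_succ]
    refine sup_le ?_ ((closure_le _).2 ?_)
    · rw [commutator_eq_bot_iff_le_centralizer.mpr fun _ _ _ _ => mul_comm _ _]
      exact bot_le
    · rintro _ ⟨h, hh, rfl⟩
      obtain ⟨y, rfl⟩ := lam_succ_le_range_pow k hh
      exact ⟨y, by simp [← pow_mul, pow_succ]⟩

theorem lam_succ_eq_bot_of_pow_eq_one {A : Type*} [CommGroup A] {k : ℕ}
    (hA : ∀ a : A, a ^ p ^ k = 1) : lam (G := A) p (k + 1) = ⊥ :=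
  eq_bot_iff.mpr fun _ ha => by
    obtain ⟨b, rfl⟩ := lam_succ_le_range_pow p k ha
    exact hA b

theorem lam_le_ker_of_pow_eq_one {A : Type*} [CommGroup A] {k : ℕ} (hA : ∀ a : A, a ^ p ^ k = 1)
    (f : G →* A) : lam p (k + 1) ≤ f.ker := fun g hg => by
  have := map_lam_le p f (k + 1) ⟨g, hg, rfl⟩
  rwa [lam_succ_eq_bot_of_pow_eq_one p hA] at this

end PCentralSeries

namespace Subgroup

variable {G H : Type*} [Group G] [Group H] {f : G →* H}

theorem isCoatom_comap_iff (hf : Function.Surjective f) {K : Subgroup H} :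
    IsCoatom (K.comap f) ↔ IsCoatom K :=
  ⟨fun hK => ⟨fun h => hK.1 (by rw [h, comap_top]), fun L hL => comap_injective hf <| by
    rw [comap_top]; exact hK.2 _ ((comap_lt_comap_of_surjective hf).mpr hL)⟩,
   isCoatom_comap_of_surjective hf⟩

theorem isCoatom_map_of_ker_le (hf : Function.Surjective f) {M : Subgroup G} (hker : f.ker ≤ M)
    (hM : IsCoatom M) : IsCoatom (M.map f) :=
  (isCoatom_comap_iff hf).mp <| by rwa [comap_map_eq_self hker]

theorem card_coatoms_eq_of_surjective (hf : Function.Surjective f)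
    (hker : ∀ M : Subgroup G, IsCoatom M → f.ker ≤ M) :
    Nat.card {M : Subgroup G // IsCoatom M} = Nat.card {K : Subgroup H // IsCoatom K} :=
  Nat.card_congr
    { toFun := fun M => ⟨M.1.map f, isCoatom_map_of_ker_le hf (hker M.1 M.2) M.2⟩
      invFun := fun K => ⟨K.1.comap f, isCoatom_comap_of_surjective hf K.2⟩
      left_inv := fun M => Subtype.ext (comap_map_eq_self (hker M.1 M.2))
      right_inv := fun K => Subtype.ext (map_comap_eq_self_of_surjective hf K.1) }

end Subgroup

theorem exists_zpow_mul_zpow_mem_commutator {G : Type*} [Group G] {a b : G}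
    (h : closure {a, b} = ⊤) (z : G) :
    ∃ i j : ℤ, z⁻¹ * (a ^ i * b ^ j) ∈ commutator G := by
  have hz : Abelianization.of z ∈ closure {Abelianization.of a, Abelianization.of b} := by
    rw [← Set.image_pair, ← MonoidHom.map_closure, h]
    exact mem_map_of_mem _ (mem_top z)
  obtain ⟨i, j, hij⟩ := mem_closure_pair.mp hz
  refine ⟨i, j, ?_⟩
  rw [← Abelianization.ker_of, MonoidHom.mem_ker, map_mul, map_inv, map_mul, map_zpow, map_zpow,
    hij, inv_mul_cancel]

section MaximalSubgroups

variable {G : Type*} [Group G] {p : ℕ}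

theorem card_eq_of_isSimpleOrder_subgroup [IsSimpleOrder (Subgroup G)] (hp : p.Prime) {k : ℕ}
    (hexp : ∀ g : G, g ^ p ^ k = 1) : Nat.card G = p := by
  have : Nontrivial G := Subgroup.nontrivial_iff.mp inferInstance
  obtain ⟨g, hg⟩ := exists_ne (1 : G)
  have hgen : ∀ x, x ∈ zpowers g := fun x =>
    ((eq_bot_or_eq_top (zpowers g)).resolve_left (zpowers_ne_bot.mpr hg)).symm ▸ mem_top x
  have : IsCyclic G := ⟨⟨g, hgen⟩⟩
  let := IsCyclic.commGroup (α := G)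
  have : IsSimpleGroup G := ⟨fun H _ => eq_bot_or_eq_top H⟩
  have hq := IsSimpleGroup.prime_card (α := G)
  rw [← orderOf_eq_card_of_forall_mem_zpowers hgen] at hq ⊢
  exact (Nat.prime_dvd_prime_iff_eq hq hp).mp
    (hq.dvd_of_dvd_pow (orderOf_dvd_of_pow_eq_one (hexp g)))

variable (p)

theorem lam_two_le_of_isCoatom [Group.IsNilpotent G] (hp : p.Prime) {k : ℕ}
    (hexp : ∀ g : G, g ^ p ^ k = 1) {M : Subgroup G} (hM : IsCoatom M) : lam p 2 ≤ M := by
  have := NormalizerCondition.normal_of_coatom M Group.normalizerCondition_of_isNilpotent hM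
  have : IsSimpleOrder (Subgroup (G ⧸ M)) :=
    (OrderIso.isSimpleOrder_iff (β := Set.Ici M) (QuotientGroup.comapMk'OrderIso M)).mpr
      (Set.isSimpleOrder_Ici_iff_isCoatom.mpr hM)
  have hcard : Nat.card (G ⧸ M) = p :=
    card_eq_of_isSimpleOrder_subgroup hp (k := k) fun x => by
      induction x using QuotientGroup.induction_on with
      | H g => rw [← QuotientGroup.mk_pow, hexp, QuotientGroup.mk_one]
  have : Fact p.Prime := ⟨hp⟩
  have : IsCyclic (G ⧸ M) := isCyclic_of_prime_card hcard
  let := IsCyclic.commGroup (α := G ⧸ M)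
  have hexpQ (x : G ⧸ M) : x ^ p ^ 1 = 1 := by rw [pow_one, ← hcard]; exact pow_card_eq_one'
  simpa using lam_le_ker_of_pow_eq_one p hexpQ (QuotientGroup.mk' M)

end MaximalSubgroups

section TwoDimensional

open Module

variable {K V : Type*} [DivisionRing K] [AddCommGroup V] [Module K V]

theorem Submodule.isCoatom_iff_finrank_eq_one (h : finrank K V = 2) {W : Submodule K V} :
    IsCoatom W ↔ finrank K W = 1 := by
  have : FiniteDimensional K V := .of_finrank_eq_succ h
  constructor
  · intro hW
    have hlt := Submodule.finrank_lt hW.1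
    refine le_antisymm (by omega) (Nat.one_le_iff_ne_zero.mpr fun h0 => ?_)
    rw [Submodule.finrank_eq_zero] at h0
    have : Nontrivial V := Module.nontrivial_of_finrank_pos (R := K) (by omega)
    obtain ⟨v, hv⟩ := exists_ne (0 : V)
    have hline := hW.2 (K ∙ v)
      (h0 ▸ bot_lt_iff_ne_bot.mpr (Submodule.span_singleton_eq_bot.not.mpr hv))
    have := finrank_span_singleton (K := K) hv
    rw [hline, finrank_top] at this
    omega
  · intro hW
    refine ⟨fun htop => by rw [htop, finrank_top] at hW; omega, fun U hU => ?_⟩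
    have := Submodule.finrank_lt_finrank_of_lt hU
    have := Submodule.finrank_le U
    exact Submodule.eq_top_of_finrank_eq (by omega)

theorem Submodule.isCoatom_iff_isAtom (h : finrank K V = 2) {W : Submodule K V} :
    IsCoatom W ↔ IsAtom W :=
  (isCoatom_iff_finrank_eq_one h).trans isAtom_iff_finrank_eq_one.symm

theorem Submodule.card_coatoms [Finite K] (h : finrank K V = 2) :
    Nat.card {W : Submodule K V // IsCoatom W} = Nat.card K + 1 := by
  rw [← Projectivization.card_of_finrank_two K V h]
  exact Nat.card_congr ((Equiv.subtypeEquivRight fun W => isCoatom_iff_finrank_eq_one h).trans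
    (Projectivization.equivSubmodule K V).symm)

end TwoDimensional

theorem ZMod.castHom_eq_zero_of_pow_mul_eq_zero {p k : ℕ} [NeZero p] {u : ZMod (p ^ (k + 1))}
    (h : (p ^ k : ZMod (p ^ (k + 1))) * u = 0) :
    ZMod.castHom (dvd_pow_self p k.succ_ne_zero) (ZMod p) u = 0 := by
  obtain ⟨m, rfl⟩ := ZMod.natCast_zmod_surjective u
  rw [← Nat.cast_pow, ← Nat.cast_mul, ZMod.natCast_eq_zero_iff, pow_succ] at h
  rw [map_natCast, ZMod.natCast_eq_zero_iff]
  exact Nat.dvd_of_mul_dvd_mul_left (pow_pos (NeZero.pos p) k) h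

abbrev MulZModSq (n : ℕ) := Multiplicative (ZMod n × ZMod n)

namespace MulZModSq

theorem pow_card_eq_one {n : ℕ} (a : MulZModSq n) : a ^ n = 1 := by
  rw [← toAdd_eq_zero, toAdd_pow]
  ext <;> simp

def castHom {m n : ℕ} (h : m ∣ n) : MulZModSq n →* MulZModSq m :=
  AddMonoidHom.toMultiplicative
    ((ZMod.castHom h (ZMod m)).toAddMonoidHom.prodMap (ZMod.castHom h (ZMod m)).toAddMonoidHom)

theorem castHom_eq_one_of_pow_eq_one {p k : ℕ} [NeZero p]
    {a : MulZModSq (p ^ (k + 1))} (h : a ^ p ^ k = 1) :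
    castHom (dvd_pow_self p k.succ_ne_zero) a = 1 := by
  rw [← toAdd_eq_zero, toAdd_pow, nsmul_eq_mul, Prod.ext_iff] at h
  simp only [Prod.fst_mul, Prod.snd_mul, Nat.cast_pow, Prod.fst_zero, Prod.snd_zero] at h
  rw [← toAdd_eq_zero]
  exact Prod.ext (ZMod.castHom_eq_zero_of_pow_mul_eq_zero h.1)
    (ZMod.castHom_eq_zero_of_pow_mul_eq_zero h.2)

variable (p : ℕ) [Fact p.Prime]

def subgroupOrderIso : Subgroup (MulZModSq p) ≃o Submodule (ZMod p) (ZMod p × ZMod p) :=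
  AddSubgroup.toSubgroup.symm.trans (AddSubgroup.toZModSubmodule p)

theorem finrank_eq_two : Module.finrank (ZMod p) (ZMod p × ZMod p) = 2 := by
  simp

theorem card_coatoms : Nat.card {K : Subgroup (MulZModSq p) // IsCoatom K} = p + 1 := by
  rw [Nat.card_congr ((subgroupOrderIso p).toEquiv.subtypeEquiv
    fun K => ((subgroupOrderIso p).isCoatom_iff K).symm),
    Submodule.card_coatoms (finrank_eq_two p), Nat.card_zmod]

theorem isAtom_of_isCoatom {K : Subgroup (MulZModSq p)} (hK : IsCoatom K) : IsAtom K := by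
  rw [← (subgroupOrderIso p).isAtom_iff, ← Submodule.isCoatom_iff_isAtom (finrank_eq_two p),
    (subgroupOrderIso p).isCoatom_iff]
  exact hK

end MulZModSq

section FreeGroupOnTwo

open FreeGroup (of)

theorem FreeGroup.closure_of_zero_of_one :
    closure {(of 0 : FreeGroup (Fin 2)), of 1} = ⊤ := by
  rw [← closure_range_of]
  congr
  ext x
  simp [Fin.exists_fin_two, eq_comm]

def MulZModSq.ofFreeGroup (n : ℕ) : FreeGroup (Fin 2) →* MulZModSq n :=
  FreeGroup.lift fun i => .ofAdd (![(1, 0), (0, 1)] i)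

theorem MulZModSq.ofFreeGroup_zpow_mul_zpow (n : ℕ) (i j : ℤ) :
    ofFreeGroup n (of 0 ^ i * of 1 ^ j) = .ofAdd ((i : ZMod n), (j : ZMod n)) := by
  simp [ofFreeGroup, ← ofAdd_zsmul, ← ofAdd_add]

theorem MulZModSq.ofFreeGroup_surjective (n : ℕ) : Function.Surjective (ofFreeGroup n) := by
  intro a
  refine ⟨of 0 ^ ((a.toAdd.1.cast : ℤ)) * of 1 ^ ((a.toAdd.2.cast : ℤ)), ?_⟩
  simp [ofFreeGroup_zpow_mul_zpow]

theorem MulZModSq.castHom_comp_ofFreeGroup {m n : ℕ} (h : m ∣ n) :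
    (castHom h).comp (ofFreeGroup n) = ofFreeGroup m :=
  FreeGroup.ext_hom _ _ fun i => by fin_cases i <;> simp [ofFreeGroup, castHom, ZMod.cast_one h]

theorem MulZModSq.ker_ofFreeGroup (p : ℕ) : (ofFreeGroup p).ker = lam p 2 := by
  have hexp (a : MulZModSq p) : a ^ p ^ 1 = 1 := by rw [pow_one]; exact a.pow_card_eq_one
  refine le_antisymm (fun z hz => ?_) (lam_le_ker_of_pow_eq_one p hexp _)
  obtain ⟨i, j, hij⟩ := exists_zpow_mul_zpow_mem_commutator FreeGroup.closure_of_zero_of_one z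
  replace hij : z⁻¹ * (of 0 ^ i * of 1 ^ j) ∈ lam p 2 := commutator_lam_le p 1 hij
  have hp : (p : ℤ) ∣ i ∧ (p : ℤ) ∣ j := by
    have := lam_le_ker_of_pow_eq_one p hexp (ofFreeGroup p) hij
    rw [MonoidHom.mem_ker, map_mul, map_inv, MonoidHom.mem_ker.mp hz, inv_one, one_mul,
      ofFreeGroup_zpow_mul_zpow, ofAdd_eq_one, Prod.mk_eq_zero] at this
    simpa only [ZMod.intCast_zmod_eq_zero_iff_dvd] using this
  obtain ⟨⟨i, rfl⟩, ⟨j, rfl⟩⟩ := hp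
  have hgen (g : FreeGroup (Fin 2)) : g ^ p ∈ lam p 2 := by
    simpa using pow_prime_pow_mem_lam p g 1
  have hab : (of 0 : FreeGroup (Fin 2)) ^ ((p : ℤ) * i) * of 1 ^ ((p : ℤ) * j) ∈ lam p 2 := by
    simp only [zpow_mul, zpow_natCast]
    exact mul_mem (zpow_mem (hgen _) i) (zpow_mem (hgen _) j)
  simpa [mul_assoc] using mul_mem hab (inv_mem hij)

end FreeGroupOnTwo

/-- `F / λ_n(F)` for `F` free on two generators, indexed by `k = n - 2`. -/
abbrev FreeLamQuot (p k : ℕ) :=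
  FreeGroup (Fin 2) ⧸ (lam p (k + 2) : Subgroup (FreeGroup (Fin 2)))

namespace FreeLamQuot

variable (p k : ℕ)

def toZModPowSq : FreeLamQuot p k →* MulZModSq (p ^ (k + 1)) :=
  QuotientGroup.lift _ (MulZModSq.ofFreeGroup _)
    (lam_le_ker_of_pow_eq_one p MulZModSq.pow_card_eq_one _)

def toZModSq : FreeLamQuot p k →* MulZModSq p :=
  QuotientGroup.lift _ (MulZModSq.ofFreeGroup p)
    (MulZModSq.ker_ofFreeGroup p ▸ lam_antitone p (by omega))

theorem castHom_toZModPowSq (x : FreeLamQuot p k) :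
    MulZModSq.castHom (dvd_pow_self p k.succ_ne_zero) (toZModPowSq p k x) = toZModSq p k x := by
  induction x using QuotientGroup.induction_on with
  | H z => exact DFunLike.congr_fun (MulZModSq.castHom_comp_ofFreeGroup _) z

theorem toZModSq_surjective : Function.Surjective (toZModSq p k) :=
  QuotientGroup.lift_surjective_of_surjective _ _ (MulZModSq.ofFreeGroup_surjective p) _

theorem ker_toZModSq : (toZModSq p k).ker = lam p 2 := by
  rw [toZModSq, QuotientGroup.ker_lift, MulZModSq.ker_ofFreeGroup,
    map_lam_of_surjective p (QuotientGroup.mk'_surjective _)]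

theorem lam_eq_bot : lam p (k + 2) = (⊥ : Subgroup (FreeLamQuot p k)) :=
  lam_quotient_lam_eq_bot p (k + 2)

theorem pow_eq_one (x : FreeLamQuot p k) : x ^ p ^ (k + 1) = 1 :=
  pow_prime_pow_eq_one_of_lam_eq_bot p (lam_eq_bot p k) x

instance : Group.IsNilpotent (FreeLamQuot p k) :=
  isNilpotent_of_lam_eq_bot p (lam_eq_bot p k)

variable {p k} [Fact p.Prime]

theorem ker_toZModSq_le_of_isCoatom {M : Subgroup (FreeLamQuot p k)} (hM : IsCoatom M) :
    (toZModSq p k).ker ≤ M :=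
  ker_toZModSq p k ▸ lam_two_le_of_isCoatom p Fact.out (pow_eq_one p k) hM

theorem ker_toZModSq_le_frattini : (toZModSq p k).ker ≤ frattini (FreeLamQuot p k) :=
  le_iInf₂ fun _ => ker_toZModSq_le_of_isCoatom

variable (p k) in
theorem card_coatoms : Nat.card {M : Subgroup (FreeLamQuot p k) // IsCoatom M} = p + 1 := by
  rw [card_coatoms_eq_of_surjective (toZModSq_surjective p k)
    fun _ => ker_toZModSq_le_of_isCoatom, MulZModSq.card_coatoms]

theorem isAtom_map_toZModSq {M : Subgroup (FreeLamQuot p k)} (hM : IsCoatom M) :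
    IsAtom (M.map (toZModSq p k)) :=
  MulZModSq.isAtom_of_isCoatom p <|
    isCoatom_map_of_ker_le (toZModSq_surjective p k) (ker_toZModSq_le_of_isCoatom hM) hM

theorem exists_toZModSq_ne_one {M : Subgroup (FreeLamQuot p k)} (hM : IsCoatom M) :
    ∃ x ∈ M, toZModSq p k x ≠ 1 := by
  by_contra! h
  exact (isAtom_map_toZModSq hM).1 (eq_bot_iff.mpr (map_le_iff_le_comap.mpr h))

theorem eq_zpowers_sup_of_isCoatom {M : Subgroup (FreeLamQuot p k)} (hM : IsCoatom M)
    {x : FreeLamQuot p k} (hx : x ∈ M) (hx1 : toZModSq p k x ≠ 1) :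
    M = zpowers x ⊔ lam p 2 := by
  have hmap : M.map (toZModSq p k) = (zpowers x).map (toZModSq p k) := by
    rw [MonoidHom.map_zpowers]
    exact (((isAtom_map_toZModSq hM).le_iff_eq (zpowers_ne_bot.mpr hx1)).mp
      (zpowers_le.mpr (mem_map_of_mem _ hx))).symm
  have hker : (toZModSq p k).ker ≤ M := ker_toZModSq_le_of_isCoatom hM
  rw [← comap_map_eq_self hker, hmap, comap_map_eq, ker_toZModSq]

theorem toZModSq_eq_one_of_pow_eq_one {x : FreeLamQuot p k}
    (hx : toZModPowSq p k x ^ p ^ k = 1) : toZModSq p k x = 1 := by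
  rw [← castHom_toZModPowSq]
  exact MulZModSq.castHom_eq_one_of_pow_eq_one hx

theorem pow_ne_one_of_toZModSq_ne_one {x : FreeLamQuot p k} (hx : toZModSq p k x ≠ 1) :
    x ^ p ^ k ≠ 1 := fun h =>
  hx (toZModSq_eq_one_of_pow_eq_one (by rw [← map_pow, h, map_one]))

theorem orderOf_of_toZModSq_ne_one {x : FreeLamQuot p k} (hx : toZModSq p k x ≠ 1) :
    orderOf x = p ^ (k + 1) :=
  orderOf_eq_prime_pow (pow_ne_one_of_toZModSq_ne_one hx) (pow_eq_one p k x)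

theorem card_pPow_of_isCoatom {M : Subgroup (FreeLamQuot p k)} (hM : IsCoatom M) :
    Nat.card (pPow M (p ^ k)) = p := by
  obtain ⟨x, hx, hx1⟩ := exists_toZModSq_ne_one hM
  rw [eq_zpowers_sup_of_isCoatom hM hx hx1, pPow_zpowers_sup_lam_two p (lam_eq_bot p k),
    Nat.card_zpowers]
  exact orderOf_eq_prime (by rw [← pow_mul, ← pow_succ, pow_eq_one])
    (pow_ne_one_of_toZModSq_ne_one hx1)

theorem eq_of_pPow_eq {M M' : Subgroup (FreeLamQuot p k)} (hM : IsCoatom M) (hM' : IsCoatom M')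
    (h : pPow M (p ^ k) = pPow M' (p ^ k)) : M = M' := by
  obtain ⟨x, hx, hx1⟩ := exists_toZModSq_ne_one hM
  obtain ⟨x', hx', hx1'⟩ := exists_toZModSq_ne_one hM'
  rw [eq_zpowers_sup_of_isCoatom hM hx hx1, eq_zpowers_sup_of_isCoatom hM' hx' hx1',
    pPow_zpowers_sup_lam_two p (lam_eq_bot p k), pPow_zpowers_sup_lam_two p (lam_eq_bot p k)] at h
  obtain ⟨j, hj⟩ := mem_zpowers_iff.mp (h ▸ mem_zpowers (x' ^ p ^ k))
  -- `x' x⁻ʲ` has trivial image mod `p`, since its image mod `p^(k+1)` is killed by `p^k`.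
  have hker : x' * x ^ (-j) ∈ (toZModSq p k).ker := by
    refine toZModSq_eq_one_of_pow_eq_one ?_
    replace hj := congrArg (toZModPowSq p k) hj
    rw [map_zpow, map_pow, map_pow] at hj
    rw [map_mul, map_zpow, mul_pow, ← hj]
    group
  have hx'M : x' ∈ M := by
    simpa using mul_mem (ker_toZModSq_le_of_isCoatom hM hker) (zpow_mem hx j)
  refine ((hM'.le_iff.mp ?_).resolve_left hM.1)
  rw [eq_zpowers_sup_of_isCoatom hM' hx' hx1', ← ker_toZModSq]
  exact sup_le (zpowers_le.mpr hx'M) (ker_toZModSq_le_of_isCoatom hM)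

end FreeLamQuot

/-- For `G = F/λ_n(F)` (`F` free of rank 2, `n ≥ 3`): `G` has exactly `p+1` maximal subgroups;
the power subgroups `M^(p^(n-2))`, as `M` ranges over the maximal subgroups, are pairwise
distinct subgroups of order `p` contained in `λ_{n-1}(F)/λ_n(F)`; and every element of a maximal
subgroup `M` outside the Frattini subgroup `Φ(G)` has order `p^(n-1)`. -/
theorem statement_5 (p n : ℕ) (hp : p.Prime) (hn : 3 ≤ n) :
    let F := FreeGroup (Fin 2)
    let G := F ⧸ lam p n
    Nat.card {M : Subgroup G // IsCoatom M} = p + 1 ∧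
    (∀ M : Subgroup G, IsCoatom M →
        pPow M (p ^ (n - 2)) ≤ Subgroup.map (QuotientGroup.mk' (lam p n)) (lam p (n - 1)) ∧
        Nat.card (pPow M (p ^ (n - 2))) = p) ∧
    (∀ M M' : Subgroup G, IsCoatom M → IsCoatom M' →
        pPow M (p ^ (n - 2)) = pPow M' (p ^ (n - 2)) → M = M') ∧
    (∀ M : Subgroup G, IsCoatom M → ∀ x ∈ M, x ∉ frattini G → orderOf x = p ^ (n - 1)) := by
  intro F G
  obtain ⟨k, rfl⟩ : ∃ k, n = k + 2 := ⟨n - 2, by omega⟩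
  have : Fact p.Prime := ⟨hp⟩
  refine ⟨FreeLamQuot.card_coatoms p k, fun M hM => ⟨?_, FreeLamQuot.card_pPow_of_isCoatom hM⟩,
    fun _ _ => FreeLamQuot.eq_of_pPow_eq, fun _ _ x _ hx => ?_⟩
  · rw [map_lam_of_surjective p (QuotientGroup.mk'_surjective _)]
    exact pPow_prime_pow_le_lam p M k
  · exact FreeLamQuot.orderOf_of_toZModSq_ne_one fun h1 =>
      hx (FreeLamQuot.ker_toZModSq_le_frattini h1)
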